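/- Let W be a finite Coxeter group with reflections T, and suppose A ⊆ T is nice. Then the Z-module D_A(W) = ⊕_{I A-admissible} Z·d_I^A, where d_I^A = Σ_{w : D_A(w) = I} w in the group ring ZW, is closed under multiplication, i.e., is a subalgebra of ZW. Moreover, it contains the identity 1 if and only if S ⊆ A. -/

import Mathlib

/-!
`W` acts on `W × ZMod 2`, a simple reflection `s` acting by `(q, ε) ↦ (s q s, ε + [q = s])`
(these maps satisfy the Coxeter relations). The second coordinate of `w • (t, 0)` is a cocycle
`c(w, t)`: the parity of the number of occurrences of `t` in the right inversion sequence of any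
word for `w`, which for a reflection `t` is `1` exactly when `ℓ(w t) < ℓ(w)`. The cocycle identity
`c(u w, t) = c(w, t) + c(u, w t w⁻¹)` shows that `D_A(u w) = D_A(w)` iff `w⁻¹ r w ∉ A` for every
right inversion `r` of `u`; peeling right descents off `u`, a function `f` on `W` is constant on
the fibres of `D_A` as soon as `f(s w) = f(w)` whenever `w⁻¹ s w ∉ A`.

The span of the `d_I^A` consists of the elements of `ℤW` whose coefficients are constant on the
fibres of `D_A`. For two such `x, y` the coefficient `Σ_h x(h) y(h⁻¹ g)` of `x y` is unchanged by
`g ↦ s g` when `g⁻¹ s g ∉ A`: match `h` with itself when `h⁻¹ s h ∈ A` (niceness applied to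
`r = h⁻¹ s h`) and with `s h` otherwise. The coefficients of `1` are constant on the fibres iff
`D_A(w) = ∅` forces `w = 1`, i.e. iff `S ⊆ A`.
-/

theorem mul_mul_inv_eq_iff_eq_inv_mul_mul {G : Type*} [Group G] (a x y : G) :
    a * x * a⁻¹ = y ↔ x = a⁻¹ * y * a := by
  constructor
  · rintro rfl; group
  · rintro rfl; group

namespace CoxeterSystem

section ReflectionCocycle

variable {B W : Type*} [Group W] {M : CoxeterMatrix B} (cs : CoxeterSystem M W)

local prefix:100 "s" => cs.simple
local prefix:100 "π" => cs.wordProd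
local prefix:100 "ℓ" => cs.length

theorem simple_mul_mul_simple_eq_iff (i : B) (x y : W) :
    s i * x * s i = y ↔ x = s i * y * s i := by
  simpa [inv_simple] using mul_mul_inv_eq_iff_eq_inv_mul_mul (s i) x y

theorem length_simple_mul_lt_length_simple_iff {i : B} {w : W} :
    ℓ (s i * w) < ℓ (s i) ↔ w = s i := by
  rw [length_simple, Nat.lt_one_iff, length_eq_zero_iff, mul_eq_one_iff_inv_eq, inv_simple, eq_comm]

theorem isRightInversion_simple_iff {i : B} {t : W} : cs.IsRightInversion (s i) t ↔ t = s i :=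
  ⟨fun h ↦ cs.length_simple_mul_lt_length_simple_iff.1 h.2,
    by rintro rfl; exact ⟨cs.isReflection_simple i, by simp⟩⟩

section Cocycle

variable [DecidableEq W]

def simplePerm (i : B) : Equiv.Perm (W × ZMod 2) :=
  Function.Involutive.toPerm (fun q ↦ (s i * q.1 * s i, q.2 + if q.1 = s i then 1 else 0)) <| by
    rintro ⟨q, ε⟩
    have hq : s i * q * s i = s i ↔ q = s i := by
      rw [simple_mul_mul_simple_eq_iff, simple_mul_simple_self, one_mul]
    ext
    · exact (cs.simple_mul_mul_simple_eq_iff i _ q).2 rfl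
    · simp only [hq, add_assoc, CharTwo.add_self_eq_zero, add_zero]

theorem simplePerm_apply (i : B) (q : W) (ε : ZMod 2) :
    cs.simplePerm i (q, ε) = (s i * q * s i, ε + if q = s i then 1 else 0) := rfl

theorem simplePerm_mul_simplePerm_pow_apply (i j : B) (k : ℕ) (q : W) (ε : ZMod 2) :
    ((cs.simplePerm i * cs.simplePerm j) ^ k) (q, ε) =
      ((s i * s j) ^ k * q * ((s i * s j) ^ k)⁻¹,
        ε + ∑ n ∈ Finset.range (2 * k), if q = s i * (s i * s j) ^ (n + 1) then 1 else 0) := by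
  set p := s i * s j
  have hconj (r : ℕ) : (p ^ r)⁻¹ = s i * p ^ r * s i := by
    have h : s i * p * (s i)⁻¹ = p⁻¹ := by simp [p, inv_simple]
    rw [← inv_pow, ← h, conj_pow, inv_simple]
  have hmem (k : ℕ) (x : W) (a : ℕ) :
      p ^ k * x * (p ^ k)⁻¹ = s i * p ^ a ↔ x = s i * p ^ (2 * k + a) := by
    have : (p ^ k)⁻¹ * (s i * p ^ a) * p ^ k = s i * p ^ (2 * k + a) := by
      rw [hconj, show 2 * k + a = k + a + k by ring, pow_add, pow_add]
      simp [mul_assoc]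
    rw [← this]
    constructor
    · rintro h; rw [← h]; group
    · rintro rfl; group
  have hsj : s j = s i * p ^ 1 := by simp [p]
  have hsjsisj : s j * s i * s j = s i * p ^ 2 := by simp [p, sq, mul_assoc]
  induction k with
  | zero => simp
  | succ k ih =>
    rw [pow_succ', Equiv.Perm.mul_apply, ih, Equiv.Perm.mul_apply, simplePerm_apply,
      simplePerm_apply]
    ext
    · simp only [pow_succ', mul_inv_rev, p]; simp [mul_assoc, inv_simple]
    · simp only [simple_mul_mul_simple_eq_iff]
      rw [hsjsisj]
      simp only [hsj, hmem]
      rw [show 2 * (k + 1) = 2 * k + 1 + 1 by ring, Finset.sum_range_succ, Finset.sum_range_succ]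
      ring

theorem isLiftable_simplePerm : M.IsLiftable cs.simplePerm := by
  intro i j
  ext ⟨q, ε⟩ : 1
  -- the summand has period `M i j`, so every term occurs twice
  have hsum : ∑ n ∈ Finset.range (2 * M i j),
      (if q = s i * (s i * s j) ^ (n + 1) then 1 else 0 : ZMod 2) = 0 := by
    simp only [two_mul, Finset.sum_range_add, add_assoc, pow_add _ (M i j), simple_mul_simple_pow,
      one_mul, CharTwo.add_self_eq_zero]
  simp [simplePerm_mul_simplePerm_pow_apply, hsum]

def permRep : W →* Equiv.Perm (W × ZMod 2) := cs.lift ⟨cs.simplePerm, cs.isLiftable_simplePerm⟩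

def reflectionCocycle (w t : W) : ZMod 2 := (cs.permRep w (t, 0)).2

theorem permRep_simple (i : B) : cs.permRep (s i) = cs.simplePerm i := lift_apply_simple _ _ _

theorem permRep_apply (w q : W) (ε : ZMod 2) :
    cs.permRep w (q, ε) = (w * q * w⁻¹, ε + cs.reflectionCocycle w q) := by
  induction w using cs.simple_induction_left generalizing q ε with
  | one => simp [reflectionCocycle]
  | mul_simple_left w i ih =>
    have h (ε : ZMod 2) : cs.permRep (s i * w) (q, ε) = (s i * (w * q * w⁻¹) * s i,
        ε + cs.reflectionCocycle w q + if w * q * w⁻¹ = s i then 1 else 0) := by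
      rw [map_mul, Equiv.Perm.mul_apply, ih, permRep_simple, simplePerm_apply]
    rw [h, show cs.reflectionCocycle (s i * w) q = _ from congrArg Prod.snd (h 0)]
    ext <;> simp [mul_assoc, inv_simple, add_assoc]

theorem reflectionCocycle_mul (u w t : W) :
    cs.reflectionCocycle (u * w) t =
      cs.reflectionCocycle w t + cs.reflectionCocycle u (w * t * w⁻¹) := by
  rw [reflectionCocycle, map_mul, Equiv.Perm.mul_apply, permRep_apply, permRep_apply, zero_add]

theorem reflectionCocycle_simple (i : B) (t : W) :
    cs.reflectionCocycle (s i) t = if t = s i then 1 else 0 := by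
  simp [reflectionCocycle, permRep_simple, simplePerm_apply]

theorem reflectionCocycle_one (t : W) : cs.reflectionCocycle 1 t = 0 := by
  simp [reflectionCocycle]

theorem reflectionCocycle_wordProd (ω : List B) (t : W) :
    cs.reflectionCocycle (π ω) t = (cs.rightInvSeq ω).count t := by
  induction ω with
  | nil => simp [reflectionCocycle_one]
  | cons i ω ih =>
    rw [wordProd_cons, reflectionCocycle_mul, ih, reflectionCocycle_simple, rightInvSeq,
      List.count_cons]
    simp only [mul_mul_inv_eq_iff_eq_inv_mul_mul, @eq_comm _ t, beq_iff_eq]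
    push_cast
    rfl

theorem reflectionCocycle_self {t : W} (ht : cs.IsReflection t) : cs.reflectionCocycle t t = 1 := by
  obtain ⟨v, i, rfl⟩ := ht
  have e : v⁻¹ * (v * s i * v⁻¹) * v⁻¹⁻¹ = s i := by group
  have h := cs.reflectionCocycle_mul v v⁻¹ (v * s i * v⁻¹)
  rw [mul_inv_cancel, reflectionCocycle_one, e] at h
  rw [reflectionCocycle_mul, e, reflectionCocycle_mul, reflectionCocycle_simple,
    mul_inv_cancel_right, if_pos rfl]
  linear_combination -h

theorem isRightInversion_iff_reflectionCocycle_eq_one {w t : W} (ht : cs.IsReflection t) :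
    cs.IsRightInversion w t ↔ cs.reflectionCocycle w t = 1 := by
  have of_eq_one (v : W) (hv : cs.reflectionCocycle v t = 1) : cs.IsRightInversion v t := by
    obtain ⟨ω, hω, rfl⟩ := cs.exists_isReduced v
    refine cs.isRightInversion_of_mem_rightInvSeq hω (List.count_pos_iff.1 (Nat.pos_of_ne_zero ?_))
    intro h
    rw [reflectionCocycle_wordProd, h] at hv
    exact absurd hv (by decide)
  refine ⟨fun hw ↦ ?_, of_eq_one w⟩
  -- `c(w, t) = c(wt·t, t) = c(t, t) + c(wt, t)`, and `t` is not a right inversion of `wt`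
  have hwt : cs.reflectionCocycle (w * t) t ≠ 1 := fun h ↦ by
    have := (of_eq_one _ h).2
    rw [mul_assoc, ht.mul_self, mul_one] at this
    exact lt_asymm this hw.2
  have hsplit := cs.reflectionCocycle_mul (w * t) t t
  rw [mul_assoc, ht.mul_self, mul_one, one_mul, ht.inv, reflectionCocycle_self cs ht] at hsplit
  rw [hsplit]
  revert hwt
  generalize cs.reflectionCocycle (w * t) t = a
  decide +revert

end Cocycle

theorem isRightInversion_mul_iff {t : W} (ht : cs.IsReflection t) (u w : W) :
    cs.IsRightInversion (u * w) t ↔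
      Xor (cs.IsRightInversion w t) (cs.IsRightInversion u (w * t * w⁻¹)) := by
  classical
  simp only [isRightInversion_iff_reflectionCocycle_eq_one cs ht,
    isRightInversion_iff_reflectionCocycle_eq_one cs (ht.conj w), reflectionCocycle_mul]
  generalize cs.reflectionCocycle w t = a
  generalize cs.reflectionCocycle u (w * t * w⁻¹) = b
  decide +revert

end ReflectionCocycle

section DescentSet

variable {B W : Type*} [Group W] {M : CoxeterMatrix B} (cs : CoxeterSystem M W)

local prefix:100 "s" => cs.simple
local prefix:100 "ℓ" => cs.length

/-- The `A`-descent set `D_A(w)`. -/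
def descentSet (A : Set W) (w : W) : Set W := {t ∈ A | ℓ (w * t) < ℓ w}

def IsNice (A : Set W) : Prop :=
  ∀ r ∈ A, ∀ w : W, w⁻¹ * r * w ∉ A → cs.descentSet A (r * w) = cs.descentSet A w

variable {cs} {A : Set W}

theorem descentSet_one : cs.descentSet A 1 = ∅ := by
  simp [descentSet]

theorem descentSet_simple (i : B) : cs.descentSet A (s i) = A ∩ {s i} :=
  Set.ext fun _ ↦ and_congr_right' cs.length_simple_mul_lt_length_simple_iff

theorem descentSet_eq_empty_iff (hS : Set.range cs.simple ⊆ A) {w : W} :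
    cs.descentSet A w = ∅ ↔ w = 1 := by
  refine ⟨fun h ↦ ?_, by rintro rfl; exact descentSet_one⟩
  by_contra hw
  obtain ⟨i, hi⟩ := cs.exists_rightDescent_of_ne_one hw
  exact (h ▸ ⟨hS ⟨i, rfl⟩, hi⟩ : s i ∈ (∅ : Set W))

theorem descentSet_mul_eq_iff (hA : ∀ t ∈ A, cs.IsReflection t) (u w : W) :
    cs.descentSet A (u * w) = cs.descentSet A w ↔
      ∀ t ∈ A, ¬ cs.IsRightInversion u (w * t * w⁻¹) := by
  have key (t : W) (ht : t ∈ A) :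
      (t ∈ cs.descentSet A (u * w) ↔ t ∈ cs.descentSet A w) ↔
        ¬ cs.IsRightInversion u (w * t * w⁻¹) := by
    have hinv (v : W) : cs.IsRightInversion v t ↔ ℓ (v * t) < ℓ v := and_iff_right (hA t ht)
    have := cs.isRightInversion_mul_iff (hA t ht) u w
    rw [hinv, hinv, xor_def] at this
    simp only [descentSet, Set.mem_sep_iff, ht, true_and, this]
    tauto
  refine ⟨fun h t ht ↦ (key t ht).1 (by rw [h]), fun h ↦ Set.ext fun t ↦ ?_⟩
  by_cases ht : t ∈ A
  · exact (key t ht).2 (h t ht)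
  · simp [descentSet, ht]

theorem descentSet_simple_mul_eq_iff (hA : ∀ t ∈ A, cs.IsReflection t) (i : B) (w : W) :
    cs.descentSet A (s i * w) = cs.descentSet A w ↔ w⁻¹ * s i * w ∉ A := by
  rw [descentSet_mul_eq_iff hA]
  simp only [isRightInversion_simple_iff, mul_mul_inv_eq_iff_eq_inv_mul_mul]
  exact ⟨fun h hA ↦ h _ hA rfl, fun h t ht hts ↦ h (hts ▸ ht)⟩

theorem apply_eq_of_descentSet_eq (hA : ∀ t ∈ A, cs.IsReflection t) {α : Type*} (f : W → α)
    (hf : ∀ i w, w⁻¹ * s i * w ∉ A → f (s i * w) = f w) {v w : W}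
    (h : cs.descentSet A v = cs.descentSet A w) : f v = f w := by
  suffices ∀ n u w, ℓ u = n → cs.descentSet A (u * w) = cs.descentSet A w → f (u * w) = f w by
    simpa using this _ (v * w⁻¹) w rfl (by simpa using h)
  intro n
  induction n using Nat.strong_induction_on with
  | _ n ih =>
    intro u w hn hD
    rcases eq_or_ne u 1 with rfl | hu
    · rw [one_mul]
    -- a right descent `s i` of `u` is a right inversion of `u`, so `D_A(s i w) = D_A(w)`
    obtain ⟨i, hi⟩ := cs.exists_rightDescent_of_ne_one hu
    have hiA : w⁻¹ * s i * w ∉ A := fun hmem ↦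
      (descentSet_mul_eq_iff hA u w).1 hD _ hmem (by
        simpa [mul_assoc] using (cs.isRightInversion_simple_iff_isRightDescent u i).2 hi)
    have hsw := (descentSet_simple_mul_eq_iff hA i w).2 hiA
    have hu' : u * w = u * s i * (s i * w) := by simp [mul_assoc]
    rw [hu', ih _ (hn ▸ hi) _ _ rfl (by rw [← hu', hD, hsw]), hf i w hiA]

end DescentSet

section DescentSubmodule

open MonoidAlgebra

variable {B W : Type*} [Group W] {M : CoxeterMatrix B} {cs : CoxeterSystem M W} {A : Set W}
variable (R : Type*) [Semiring R]

local prefix:100 "s" => cs.simple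

variable (cs A) in
def descentSubmodule : Submodule R (MonoidAlgebra R W) where
  carrier := {x | ∀ v w, cs.descentSet A v = cs.descentSet A w → x.coeff v = x.coeff w}
  add_mem' hx hy v w h := by simp [coeff_add, hx v w h, hy v w h]
  zero_mem' := by simp
  smul_mem' c x hx v w h := by simp [coeff_smul, hx v w h]

theorem mem_descentSubmodule {x : MonoidAlgebra R W} : x ∈ descentSubmodule cs A R ↔
    ∀ v w, cs.descentSet A v = cs.descentSet A w → x.coeff v = x.coeff w :=
  Iff.rfl

open scoped Classical in
variable (cs A) in
/-- The element `d_I^A`. -/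
noncomputable def descentClassSum [Fintype W] (I : Set W) : MonoidAlgebra R W :=
  ∑ w ∈ Finset.univ.filter (fun w : W ↦ cs.descentSet A w = I), of R W w

theorem coeff_descentClassSum [Fintype W] (I : Set W) (w : W) :
    (descentClassSum cs A R I).coeff w = if cs.descentSet A w = I then 1 else 0 := by
  classical
  simp only [descentClassSum, coeff_sum, of_apply, coeff_single, Finsupp.finsetSum_apply,
    Finsupp.single_apply, Finset.sum_ite_eq', Finset.mem_filter, Finset.mem_univ, true_and]

theorem descentClassSum_mem [Fintype W] (I : Set W) :
    descentClassSum cs A R I ∈ descentSubmodule cs A R := by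
  intro v w h
  simp only [coeff_descentClassSum, h]

theorem span_descentClassSum [Fintype W] :
    Submodule.span R {d | ∃ I : Set W, (∃ w, cs.descentSet A w = I) ∧ d = descentClassSum cs A R I}
      = descentSubmodule cs A R := by
  classical
  refine le_antisymm (Submodule.span_le.2 ?_) fun x hx ↦ ?_
  · rintro _ ⟨I, -, rfl⟩
    exact descentClassSum_mem R I
  have hx' : x = ∑ w, x.coeff w • of R W w := by
    ext w
    simp [coeff_sum, of_apply]
  rw [hx', ← Finset.sum_fiberwise_of_maps_to (g := cs.descentSet A)
    (t := Finset.univ.image (cs.descentSet A))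
    (fun w _ ↦ Finset.mem_image_of_mem _ (Finset.mem_univ w))]
  refine Submodule.sum_mem _ fun I hI ↦ ?_
  obtain ⟨v, -, rfl⟩ := Finset.mem_image.1 hI
  rw [Finset.sum_congr rfl fun w hw ↦ by rw [hx w v (Finset.mem_filter.1 hw).2], ← Finset.smul_sum]
  exact Submodule.smul_mem _ _ (Submodule.subset_span ⟨_, ⟨v, rfl⟩, rfl⟩)

theorem mul_mem_descentSubmodule [Fintype W] (hA : ∀ t ∈ A, cs.IsReflection t)
    (hnice : cs.IsNice A) {x y : MonoidAlgebra R W} (hx : x ∈ descentSubmodule cs A R)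
    (hy : y ∈ descentSubmodule cs A R) : x * y ∈ descentSubmodule cs A R := by
  classical
  intro v w hvw
  refine apply_eq_of_descentSet_eq hA (fun g ↦ (x * y).coeff g) (fun i g hg ↦ ?_) hvw
  have hconj (h : W) : (s i * h)⁻¹ * s i * (s i * h) = h⁻¹ * s i * h := by
    simp [mul_assoc, inv_simple]
  let φ : Equiv.Perm W := Function.Involutive.toPerm
    (fun h ↦ if h⁻¹ * s i * h ∈ A then h else s i * h) fun h ↦ by
      by_cases hh : h⁻¹ * s i * h ∈ A
      · simp only [if_pos hh]
      · simp only [if_neg hh, hconj, simple_mul_simple_cancel_left]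
  rw [coeff_mul_apply_left, coeff_mul_apply_left, Finsupp.sum_fintype _ _ (fun _ ↦ zero_mul _),
    Finsupp.sum_fintype _ _ (fun _ ↦ zero_mul _)]
  have hφ (h : W) : φ h = if h⁻¹ * s i * h ∈ A then h else s i * h := rfl
  rw [← Equiv.sum_comp φ]
  refine Finset.sum_congr rfl fun h _ ↦ ?_
  rw [hφ]
  split_ifs with hh
  · have hcomm : (h⁻¹ * g)⁻¹ * (h⁻¹ * s i * h) * (h⁻¹ * g) = g⁻¹ * s i * g := by group
    have hD := hnice _ hh (h⁻¹ * g) (hcomm ▸ hg)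
    rw [show h⁻¹ * s i * h * (h⁻¹ * g) = h⁻¹ * (s i * g) by group] at hD
    rw [hy _ _ hD]
  · rw [hx _ _ ((descentSet_simple_mul_eq_iff hA i h).2 hh), mul_inv_rev, inv_simple, mul_assoc,
      simple_mul_simple_cancel_left]

theorem one_mem_descentSubmodule_iff [Nontrivial R] :
    1 ∈ descentSubmodule cs A R ↔ Set.range cs.simple ⊆ A := by
  classical
  simp only [mem_descentSubmodule, one_def, coeff_single, Finsupp.single_apply]
  constructor
  · rintro h _ ⟨i, rfl⟩
    by_contra hi
    have hi1 : s i ≠ 1 := fun h ↦ by simpa [h] using cs.length_simple i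
    have := h 1 (s i) (by rw [descentSet_one, descentSet_simple, Set.inter_singleton_eq_empty.2 hi])
    simp [hi1.symm] at this
  · intro hS v w hvw
    have : 1 = v ↔ 1 = w := by
      rw [eq_comm, ← descentSet_eq_empty_iff hS, hvw, descentSet_eq_empty_iff hS, eq_comm]
    simp only [this]

end DescentSubmodule

end CoxeterSystem

open scoped Classical in
/-- If `W` is a finite Coxeter group and `A ⊆ T` is nice, then the
`ℤ`-span of the elements `d_I^A = Σ_{D_A(w)=I} w` over all `A`-admissible `I` is closed
under multiplication in `ℤW`, and it contains `1` iff `S ⊆ A`. -/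
theorem descent_algebra_of_nice {B W : Type*} [Group W] [Fintype W] {M : CoxeterMatrix B}
    (cs : CoxeterSystem M W) (A : Set W) (hA : ∀ t ∈ A, cs.IsReflection t)
    (hnice : ∀ r ∈ A, ∀ w : W, w⁻¹ * r * w ∉ A →
      {t ∈ A | cs.length (r * w * t) < cs.length (r * w)} =
        {t ∈ A | cs.length (w * t) < cs.length w}) :
    (∀ x y : MonoidAlgebra ℤ W,
      x ∈ Submodule.span ℤ
        {d : MonoidAlgebra ℤ W |
          ∃ I : Set W, (∃ w : W, {t ∈ A | cs.length (w * t) < cs.length w} = I) ∧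
            d = ∑ w ∈ Finset.univ.filter
                (fun w : W => {t ∈ A | cs.length (w * t) < cs.length w} = I),
                MonoidAlgebra.of ℤ W w} →
      y ∈ Submodule.span ℤ
        {d : MonoidAlgebra ℤ W |
          ∃ I : Set W, (∃ w : W, {t ∈ A | cs.length (w * t) < cs.length w} = I) ∧
            d = ∑ w ∈ Finset.univ.filter
                (fun w : W => {t ∈ A | cs.length (w * t) < cs.length w} = I),
                MonoidAlgebra.of ℤ W w} →
      x * y ∈ Submodule.span ℤ
        {d : MonoidAlgebra ℤ W |
          ∃ I : Set W, (∃ w : W, {t ∈ A | cs.length (w * t) < cs.length w} = I) ∧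
            d = ∑ w ∈ Finset.univ.filter
                (fun w : W => {t ∈ A | cs.length (w * t) < cs.length w} = I),
                MonoidAlgebra.of ℤ W w}) ∧
    ((1 : MonoidAlgebra ℤ W) ∈ Submodule.span ℤ
        {d : MonoidAlgebra ℤ W |
          ∃ I : Set W, (∃ w : W, {t ∈ A | cs.length (w * t) < cs.length w} = I) ∧
            d = ∑ w ∈ Finset.univ.filter
                (fun w : W => {t ∈ A | cs.length (w * t) < cs.length w} = I),
                MonoidAlgebra.of ℤ W w} ↔
      Set.range cs.simple ⊆ A) := by
  -- the span is taken for the `ℤ`-module structure of the additive group `ℤ[W]`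
  rw [show AddCommGroup.toIntModule (MonoidAlgebra ℤ W) = MonoidAlgebra.instModule from
    Subsingleton.elim _ _]
  erw [CoxeterSystem.span_descentClassSum]
  exact ⟨fun x y hx hy ↦ CoxeterSystem.mul_mem_descentSubmodule ℤ hA hnice hx hy,
    CoxeterSystem.one_mem_descentSubmodule_iff ℤ⟩
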